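/- arXiv:1710.08499 — 2 statements merged into one kernel-verified Lean document; each statement's English description precedes it below -/
import Mathlib

section
/- Let k be a field and A a finite-dimensional associative k-algebra. For every Y ∈ Matrix (Fin n) (Fin n) A, the trace of the linear endomorphism ad Y : X ↦ Y*X − X*Y of Matrix (Fin n) (Fin n) A equals n · Σ_{i} tr(ad (Y i i) : A → A). Consequently, if A is unimodular, then the matrix algebra Matrix (Fin n) (Fin n) A is unimodular. (This is the content of the paper's claim that unimodularity of A₀ implies the invariance of the volume element ϖ under the coadjoint action of A₀ ⊗ gl_N, underlying Proposition 1.) -/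
/-!
Since `∑ i j, single i j ∘ entry i j = id` and the trace is cyclic, the trace of an endomorphism
`f` of `Matrix m n M` is the sum of the traces of its diagonal blocks `entry i j ∘ f ∘ single i j`
on `M`. For left multiplication by `Y` the `(i, j)` block is left multiplication by `Y i i`, for
right multiplication it is right multiplication by `Y j j`; the free index contributes the
factor `n`.
-/

/-- `A` is unimodular if `tr (ad a) = 0` for every `a ∈ A`, where
`ad a = LinearMap.mulLeft k a - LinearMap.mulRight k a`. -/
def Unimodular (k A : Type*) [Field k] [Ring A] [Algebra k A] : Prop :=
  ∀ a : A, LinearMap.trace k A (LinearMap.mulLeft k a - LinearMap.mulRight k a) = 0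

namespace LinearMap

variable {R M N ι : Type*} [CommRing R] [AddCommGroup M] [Module R M]
  [Module.Free R M] [Module.Finite R M] [AddCommGroup N] [Module R N]
  [Module.Free R N] [Module.Finite R N] [Fintype ι]

theorem trace_eq_sum_trace_comp_of_sum_comp_eq_id {s : ι → N →ₗ[R] M} {p : ι → M →ₗ[R] N}
    (h : ∑ i, s i ∘ₗ p i = LinearMap.id) (f : M →ₗ[R] M) :
    trace R M f = ∑ i, trace R N (p i ∘ₗ f ∘ₗ s i) := by
  calc trace R M f
      = trace R M (f ∘ₗ ∑ i, s i ∘ₗ p i) := by rw [h, comp_id]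
    _ = ∑ i, trace R M ((f ∘ₗ s i) ∘ₗ p i) := by
        rw [← Module.End.mul_eq_comp, Finset.mul_sum, map_sum]
        rfl
    _ = ∑ i, trace R N (p i ∘ₗ f ∘ₗ s i) :=
        Finset.sum_congr rfl fun i _ ↦ trace_comp_comm' (p i) (f ∘ₗ s i)

end LinearMap

namespace Matrix

variable (R : Type*)

section

variable {M m n : Type*} [Fintype m] [Fintype n] [DecidableEq m] [DecidableEq n]

theorem sum_singleLinearMap_comp_entryLinearMap [Semiring R] [AddCommMonoid M] [Module R M] :
    ∑ ij : m × n, singleLinearMap R ij.1 ij.2 ∘ₗ entryLinearMap R M ij.1 ij.2 =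
      LinearMap.id := by
  ext X : 1
  simp [Fintype.sum_prod_type, ← matrix_eq_sum_single X]

theorem trace_eq_sum_trace_entryLinearMap_comp [CommRing R] [AddCommGroup M] [Module R M]
    [Module.Free R M] [Module.Finite R M] (f : Matrix m n M →ₗ[R] Matrix m n M) :
    LinearMap.trace R (Matrix m n M) f =
      ∑ i, ∑ j, LinearMap.trace R M (entryLinearMap R M i j ∘ₗ f ∘ₗ singleLinearMap R i j) := by
  rw [LinearMap.trace_eq_sum_trace_comp_of_sum_comp_eq_id
    (sum_singleLinearMap_comp_entryLinearMap R), Fintype.sum_prod_type]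

end

section

variable {A n : Type*} [CommRing R] [Ring A] [Algebra R A] [Fintype n] [DecidableEq n]

theorem entryLinearMap_comp_mulLeft_comp_singleLinearMap (Y : Matrix n n A) (i j : n) :
    entryLinearMap R A i j ∘ₗ LinearMap.mulLeft R Y ∘ₗ singleLinearMap R i j =
      LinearMap.mulLeft R (Y i i) := by
  ext a
  simp

theorem entryLinearMap_comp_mulRight_comp_singleLinearMap (Y : Matrix n n A) (i j : n) :
    entryLinearMap R A i j ∘ₗ LinearMap.mulRight R Y ∘ₗ singleLinearMap R i j =
      LinearMap.mulRight R (Y j j) := by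
  ext a
  simp

end

end Matrix

namespace LinearMap

open Matrix

variable {R A n : Type*} [CommRing R] [Ring A] [Algebra R A] [Module.Free R A]
  [Module.Finite R A] [Fintype n] [DecidableEq n]

theorem trace_mulLeft_matrix (Y : Matrix n n A) :
    trace R (Matrix n n A) (mulLeft R Y) =
      Fintype.card n • ∑ i, trace R A (mulLeft R (Y i i)) := by
  simp only [trace_eq_sum_trace_entryLinearMap_comp,
    entryLinearMap_comp_mulLeft_comp_singleLinearMap, Finset.sum_const, Finset.card_univ,
    Finset.smul_sum]

theorem trace_mulRight_matrix (Y : Matrix n n A) :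
    trace R (Matrix n n A) (mulRight R Y) =
      Fintype.card n • ∑ i, trace R A (mulRight R (Y i i)) := by
  rw [trace_eq_sum_trace_entryLinearMap_comp, Finset.sum_comm]
  simp only [entryLinearMap_comp_mulRight_comp_singleLinearMap, Finset.sum_const,
    Finset.card_univ, Finset.smul_sum]

theorem trace_mulLeft_sub_mulRight_matrix (Y : Matrix n n A) :
    trace R (Matrix n n A) (mulLeft R Y - mulRight R Y) =
      Fintype.card n • ∑ i, trace R A (mulLeft R (Y i i) - mulRight R (Y i i)) := by
  simp only [map_sub, trace_mulLeft_matrix, trace_mulRight_matrix, Finset.sum_sub_distrib,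
    smul_sub]

end LinearMap

theorem Unimodular.matrix {k A : Type*} [Field k] [Ring A] [Algebra k A] [FiniteDimensional k A]
    (hA : Unimodular k A) (n : Type*) [Fintype n] [DecidableEq n] :
    Unimodular k (Matrix n n A) := fun Y ↦ by
  rw [LinearMap.trace_mulLeft_sub_mulRight_matrix, Finset.sum_eq_zero fun i _ ↦ hA (Y i i),
    smul_zero]

/-- For every matrix `Y` over a finite-dimensional algebra `A`, the trace of
`ad Y` on the matrix algebra equals `n • ∑ i, tr (ad (Y i i))`; consequently
unimodularity of `A` implies unimodularity of `Matrix (Fin n) (Fin n) A`. -/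
theorem stmt_2 (k : Type*) [Field k] (A : Type*) [Ring A] [Algebra k A]
    [FiniteDimensional k A] :
    (∀ (n : ℕ) (Y : Matrix (Fin n) (Fin n) A),
      LinearMap.trace k (Matrix (Fin n) (Fin n) A)
          (LinearMap.mulLeft k Y - LinearMap.mulRight k Y)
        = n • ∑ i, LinearMap.trace k A
            (LinearMap.mulLeft k (Y i i) - LinearMap.mulRight k (Y i i))) ∧
    (Unimodular k A → ∀ n : ℕ, Unimodular k (Matrix (Fin n) (Fin n) A)) :=
  ⟨fun n Y ↦ by rw [LinearMap.trace_mulLeft_sub_mulRight_matrix, Fintype.card_fin],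
    fun hA n ↦ hA.matrix (Fin n)⟩
end

section
/- Let k be a field, A a finite-dimensional associative k-algebra, and η a symmetric invariant nondegenerate bilinear form on A, with dual bases (e_α)_{α ∈ Fin r}, (f_α)_{α ∈ Fin r}. Then A is unimodular (i.e. tr(ad a) = 0 for all a ∈ A) if and only if Σ_α (e_α * f_α − f_α * e_α) = 0 in A. (Coordinate criterion for the paper's unimodularity Condition (7).) -/
/-!
Expanding the trace of an endomorphism `φ` in the basis `e` and reading coordinates off with the
dual family `f` gives `tr φ = ∑ η (φ eₐ) fₐ`. For `φ = ad a`, invariance and symmetry of `η` move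
`a` to the left in each term, so `tr (ad a) = η a (∑ (eₐ fₐ - fₐ eₐ))`; nondegeneracy of `η` then
makes this vanish for all `a` exactly when the sum does.
-/

section DualFamily

variable {R M ι : Type*} [CommSemiring R] [AddCommMonoid M] [Module R M]
  [Fintype ι] [DecidableEq ι] (B : M →ₗ[R] M →ₗ[R] R) (e : Module.Basis ι R M) {f : ι → M}

theorem Module.Basis.repr_apply_eq_of_dual
    (hdual : ∀ i j, B (e i) (f j) = if i = j then 1 else 0) (x : M) (j : ι) :
    e.repr x j = B x (f j) := by
  conv_rhs => rw [← e.sum_repr x]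
  simp only [map_sum, LinearMap.map_smul₂, LinearMap.sum_apply, hdual,
    smul_eq_mul, mul_ite, mul_one, mul_zero, Finset.sum_ite_eq', Finset.mem_univ, if_true]

theorem LinearMap.trace_eq_sum_of_dual
    (hdual : ∀ i j, B (e i) (f j) = if i = j then 1 else 0) (φ : M →ₗ[R] M) :
    LinearMap.trace R M φ = ∑ i, B (φ (e i)) (f i) := by
  rw [LinearMap.trace_eq_matrix_trace R e, Matrix.trace]
  refine Finset.sum_congr rfl fun i _ => ?_
  rw [Matrix.diag_apply, LinearMap.toMatrix_apply, e.repr_apply_eq_of_dual B hdual]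

end DualFamily

theorem LinearMap.trace_mulLeft_sub_mulRight_eq_of_dual {R A ι : Type*} [CommRing R] [Ring A]
    [Algebra R A] [Fintype ι] [DecidableEq ι] (B : A →ₗ[R] A →ₗ[R] R)
    (hsymm : ∀ a b, B a b = B b a) (hinv : ∀ a b c, B (a * b) c = B a (b * c))
    (e : Module.Basis ι R A) {f : ι → A}
    (hdual : ∀ i j, B (e i) (f j) = if i = j then 1 else 0) (a : A) :
    LinearMap.trace R A (LinearMap.mulLeft R a - LinearMap.mulRight R a) =
      B a (∑ i, (e i * f i - f i * e i)) := by
  rw [LinearMap.trace_eq_sum_of_dual B e hdual, map_sum]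
  refine Finset.sum_congr rfl fun i _ => ?_
  have left : B (a * e i) (f i) = B a (e i * f i) := hinv _ _ _
  have right : B (e i * a) (f i) = B a (f i * e i) := by
    rw [hsymm, ← hinv, hsymm]
  simp [left, right]

theorem stmt_5_general {k : Type*} [Field k] {A : Type*} [Ring A] [Algebra k A]
    (η : A →ₗ[k] A →ₗ[k] k)
    (hsymm : ∀ a b : A, η a b = η b a)
    (hinv : ∀ a b c : A, η (a * b) c = η a (b * c))
    (hnd : ∀ a : A, (∀ b : A, η a b = 0) → a = 0)
    (r : ℕ) (e : Module.Basis (Fin r) k A) (f : Fin r → A)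
    (hdual : ∀ α β : Fin r, η (e α) (f β) = if α = β then 1 else 0) :
    (∀ a : A,
        LinearMap.trace k A (LinearMap.mulLeft k a - LinearMap.mulRight k a) = 0)
      ↔ ∑ α, (e α * f α - f α * e α) = 0 := by
  simp only [LinearMap.trace_mulLeft_sub_mulRight_eq_of_dual η hsymm hinv e hdual]
  refine ⟨fun h => hnd _ fun b => ?_, fun h a => by rw [h, map_zero]⟩
  rw [hsymm, h b]

/-- Coordinate criterion for unimodularity: given a symmetric invariant
nondegenerate bilinear form with dual bases `(e_α)`, `(f_α)`, the algebra `A`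
is unimodular iff `∑ α, (e_α * f_α - f_α * e_α) = 0`. -/
theorem stmt_5 {k : Type*} [Field k] {A : Type*} [Ring A] [Algebra k A]
    [FiniteDimensional k A]
    (η : A →ₗ[k] A →ₗ[k] k)
    (hsymm : ∀ a b : A, η a b = η b a)
    (hinv : ∀ a b c : A, η (a * b) c = η a (b * c))
    (hnd : ∀ a : A, (∀ b : A, η a b = 0) → a = 0)
    (r : ℕ) (e : Module.Basis (Fin r) k A) (f : Fin r → A)
    (hdual : ∀ α β : Fin r, η (e α) (f β) = if α = β then 1 else 0) :
    (∀ a : A,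
        LinearMap.trace k A (LinearMap.mulLeft k a - LinearMap.mulRight k a) = 0)
      ↔ ∑ α, (e α * f α - f α * e α) = 0 :=
  stmt_5_general η hsymm hinv hnd r e f hdual
end
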